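/- arXiv:1610.08470 — 4 statements merged into one kernel-verified Lean document; each statement's English description precedes it below -/
import Mathlib

section
/- Let f : ℤ → {0,1} be a weight diagram with n black balls, with solid-arrow targets ⟵i▲ defined as above. If i₁ < i₂ are black-ball positions, j₁ ∈ ⟵i₁▲ and j₂ ∈ ⟵i₂▲, then either j₂ < j₁ or j₂ > i₁. In particular, ⟵i₁▲ ∩ ⟵i₂▲ = ∅ (two solid arrows can only intersect at a common source). -/
/-- The ±1 marker of a weight diagram `f : ℤ → {0,1}`: `g(i) = (-1)^(f(i)+1)`,
i.e. `1` on black balls and `-1` on empty positions. -/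
def bg (f : ℤ → ℤ) (i : ℤ) : ℤ := if f i = 1 then 1 else -1

/-- `r⁺(i,j) = Σ_{s=j}^{i-1} g(s)`. -/
noncomputable def rpl (f : ℤ → ℤ) (i j : ℤ) : ℤ := ∑ s ∈ Finset.Icc j (i - 1), bg f s

/-- `r⁻(i,j) = -Σ_{s=j+1}^{i} g(s)`. -/
noncomputable def rmi (f : ℤ → ℤ) (i j : ℤ) : ℤ := -∑ s ∈ Finset.Icc (j + 1) i, bg f s

/-- The set `⟵i▲(f)` of targets of solid arrows starting at position `i`:
`{j < i : r⁺(i,j) = 0 and r⁺(i,s) ≥ 0 for all j < s < i}`. -/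
def solidT (f : ℤ → ℤ) (i : ℤ) : Set ℤ :=
  {j | j < i ∧ rpl f i j = 0 ∧ ∀ s, j < s → s < i → 0 ≤ rpl f i s}

/-- The set `j⇢▼(f)` of targets of dashed arrows starting at position `j`:
`{i > j : r⁻(i,j) = 0 and r⁻(s,j) ≥ 0 for all j < s < i}`. -/
def dashT (f : ℤ → ℤ) (j : ℤ) : Set ℤ :=
  {i | j < i ∧ rmi f i j = 0 ∧ ∀ s, j < s → s < i → 0 ≤ rmi f s j}

/-- `f : ℤ → ℤ` is a weight diagram with `n` black balls: it takes values in `{0,1}`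
and has exactly `n` positions with value `1`. -/
def IsWD (f : ℤ → ℤ) (n : ℕ) : Prop :=
  (∀ i, f i = 0 ∨ f i = 1) ∧ {i | f i = 1}.Finite ∧ {i | f i = 1}.ncard = n

/-!
Suppose `j₁ ≤ j₂ ≤ i₁ < i₂`. The height `r⁺(i₂, ·)` is additive along consecutive intervals, so
`r⁺(i₂, j₂) = r⁺(i₁, j₂) + r⁺(i₂, i₁)`. The first term is `≥ 0` because `j₂` lies under the arrow
`i₁ → j₁`; the second is `≥ 1` because the black ball at `i₁` contributes `+1` and the rest of the
arrow `i₂ → j₂` has height `≥ 0`. This contradicts `r⁺(i₂, j₂) = 0`.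
-/

lemma rpl_eq_sum_Ico (f : ℤ → ℤ) (i j : ℤ) : rpl f i j = ∑ s ∈ Finset.Ico j i, bg f s := by
  rw [rpl, Finset.Icc_sub_one_right_eq_Ico]

lemma rpl_self (f : ℤ → ℤ) (i : ℤ) : rpl f i i = 0 := by
  simp [rpl_eq_sum_Ico]

lemma rpl_add_rpl (f : ℤ → ℤ) {i j k : ℤ} (hjk : j ≤ k) (hki : k ≤ i) :
    rpl f k j + rpl f i k = rpl f i j := by
  simp only [rpl_eq_sum_Ico]
  rw [← Finset.sum_union (Finset.Ico_disjoint_Ico_consecutive j k i),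
    Finset.Ico_union_Ico_eq_Ico hjk hki]

lemma rpl_succ_right (f : ℤ → ℤ) {i j : ℤ} (h : j < i) :
    rpl f i j = bg f j + rpl f i (j + 1) := by
  rw [← rpl_add_rpl f (Int.le_add_one le_rfl) h, rpl, add_sub_cancel_right, Finset.Icc_self,
    Finset.sum_singleton]

lemma bg_of_eq_one {f : ℤ → ℤ} {i : ℤ} (hi : f i = 1) : bg f i = 1 := if_pos hi

lemma rpl_nonneg_of_mem_solidT {f : ℤ → ℤ} {i j s : ℤ} (hj : j ∈ solidT f i)
    (hjs : j ≤ s) (hsi : s ≤ i) : 0 ≤ rpl f i s := by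
  obtain ⟨-, hzero, hnonneg⟩ := hj
  rcases hjs.eq_or_lt with rfl | hjs
  · exact hzero.ge
  rcases hsi.eq_or_lt with rfl | hsi
  · exact (rpl_self f s).ge
  exact hnonneg s hjs hsi

lemma one_le_rpl_of_mem_solidT {f : ℤ → ℤ} {i j k : ℤ} (hj : j ∈ solidT f i)
    (hk : f k = 1) (hjk : j ≤ k) (hki : k < i) : 1 ≤ rpl f i k := by
  have hrest : 0 ≤ rpl f i (k + 1) := rpl_nonneg_of_mem_solidT hj (by omega) hki
  rw [rpl_succ_right f hki, bg_of_eq_one hk]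
  omega

theorem solidT_not_nested {f : ℤ → ℤ} {i₁ i₂ j₁ j₂ : ℤ} (hi₁ : f i₁ = 1) (h12 : i₁ < i₂)
    (hj₁ : j₁ ∈ solidT f i₁) (hj₂ : j₂ ∈ solidT f i₂) : j₂ < j₁ ∨ i₁ < j₂ := by
  by_contra! h
  obtain ⟨hj₁j₂, hj₂i₁⟩ := h
  have hinner : 0 ≤ rpl f i₁ j₂ := rpl_nonneg_of_mem_solidT hj₁ hj₁j₂ hj₂i₁
  have hball : 1 ≤ rpl f i₂ i₁ := one_le_rpl_of_mem_solidT hj₂ hi₁ hj₂i₁ h12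
  have hsplit := rpl_add_rpl f hj₂i₁ h12.le
  have hzero : rpl f i₂ j₂ = 0 := hj₂.2.1
  omega

theorem stmt4_general (f : ℤ → ℤ) (i₁ i₂ j₁ j₂ : ℤ)
    (hi₁ : f i₁ = 1) (h12 : i₁ < i₂)
    (hj₁ : j₁ ∈ solidT f i₁) (hj₂ : j₂ ∈ solidT f i₂) :
    (j₂ < j₁ ∨ i₁ < j₂) ∧ solidT f i₁ ∩ solidT f i₂ = ∅ := by
  refine ⟨solidT_not_nested hi₁ h12 hj₁ hj₂, Set.eq_empty_of_forall_notMem ?_⟩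
  rintro j ⟨hj₁', hj₂'⟩
  exact (solidT_not_nested hi₁ h12 hj₁' hj₂').elim (lt_irrefl j) hj₁'.1.not_gt

/-- Two solid arrows in a weight diagram can only intersect at a common
source: if `i₁ < i₂` are black-ball positions, `j₁ ∈ ⟵i₁▲` and `j₂ ∈ ⟵i₂▲`, then either
`j₂ < j₁` or `j₂ > i₁`; in particular `⟵i₁▲ ∩ ⟵i₂▲ = ∅`. -/
theorem stmt4 (n : ℕ) (f : ℤ → ℤ) (hf : IsWD f n) (i₁ i₂ j₁ j₂ : ℤ)
    (hi₁ : f i₁ = 1) (hi₂ : f i₂ = 1) (h12 : i₁ < i₂)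
    (hj₁ : j₁ ∈ solidT f i₁) (hj₂ : j₂ ∈ solidT f i₂) :
    (j₂ < j₁ ∨ i₁ < j₂) ∧ solidT f i₁ ∩ solidT f i₂ = ∅ :=
  stmt4_general f i₁ i₂ j₁ j₂ hi₁ h12 hj₁ hj₂
end

section
/- Let f : ℤ → {0,1} be a weight diagram with n black balls. Define g(i) = (-1)^(f(i)+1), r⁻(i,j) = -Σ_{s=j+1}^{i} g(s) for j < i, and for j ∉ c = f⁻¹(1) define j⇢▼ = {i > j : r⁻(i,j) = 0 and r⁻(s,j) ≥ 0 for all j < s < i}. If j₁ < j₂ are both empty positions, i₁ ∈ j₁⇢▼ and i₂ ∈ j₂⇢▼, then either i₂ < i₁ or i₁ < j₂. In particular j₁⇢▼ ∩ j₂⇢▼ = ∅. -/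
/-!
Since `r⁻(·, j)` is additive along `j ≤ k ≤ i` and a dashed arrow keeps it nonnegative,
passing the empty position `j₂` inside the arrow `j₁ ⇢ i₁` makes `r⁻(j₂, j₁) ≥ 1`, hence
`r⁻(i₁, j₂) ≤ -1`. An arrow `j₂ ⇢ i₂` with `j₂ ≤ i₁ ≤ i₂` would force `r⁻(i₁, j₂) ≥ 0`.
-/

open Finset

lemma rmi_eq_neg_sum_Ioc (f : ℤ → ℤ) (i j : ℤ) : rmi f i j = -∑ s ∈ Ioc j i, bg f s := by
  rw [rmi, Icc_add_one_left_eq_Ioc]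

lemma rmi_add (f : ℤ → ℤ) {i j k : ℤ} (hjk : j ≤ k) (hki : k ≤ i) :
    rmi f i j = rmi f i k + rmi f k j := by
  simp only [rmi_eq_neg_sum_Ioc, ← Ioc_union_Ioc_eq_Ioc hjk hki,
    sum_union (Ioc_disjoint_Ioc_of_le le_rfl)]
  ring

@[simp]
lemma rmi_self (f : ℤ → ℤ) (j : ℤ) : rmi f j j = 0 := by
  simp [rmi_eq_neg_sum_Ioc]

lemma rmi_sub_one_of_ne_one (f : ℤ → ℤ) {j : ℤ} (hj : f j ≠ 1) : rmi f j (j - 1) = 1 := by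
  have hsingle : Ioc (j - 1) j = {j} := by ext; simp only [mem_Ioc, mem_singleton]; omega
  simp [rmi_eq_neg_sum_Ioc, hsingle, bg, hj]

lemma rmi_nonneg_of_mem_dashT (f : ℤ → ℤ) {i j s : ℤ} (hi : i ∈ dashT f j)
    (hjs : j ≤ s) (hsi : s ≤ i) : 0 ≤ rmi f s j := by
  obtain ⟨-, hzero, hnonneg⟩ := hi
  rcases hjs.eq_or_lt with rfl | hjs
  · simp
  rcases hsi.eq_or_lt with rfl | hsi
  · exact hzero.ge
  exact hnonneg s hjs hsi

lemma one_le_rmi_of_mem_dashT (f : ℤ → ℤ) {i j k : ℤ} (hi : i ∈ dashT f j) (hk : f k ≠ 1)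
    (hjk : j < k) (hki : k ≤ i) : 1 ≤ rmi f k j := by
  have hprev : 0 ≤ rmi f (k - 1) j := rmi_nonneg_of_mem_dashT f hi (by omega) (by omega)
  rw [rmi_add f (by omega : j ≤ k - 1) (by omega : k - 1 ≤ k), rmi_sub_one_of_ne_one f hk]
  omega

lemma lt_or_lt_of_mem_dashT (f : ℤ → ℤ) {j₁ j₂ i₁ i₂ : ℤ} (hj₂ : f j₂ ≠ 1) (h12 : j₁ < j₂)
    (hi₁ : i₁ ∈ dashT f j₁) (hi₂ : i₂ ∈ dashT f j₂) : i₂ < i₁ ∨ i₁ < j₂ := by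
  by_contra! ⟨hi₁i₂, hj₂i₁⟩
  have hpast : 1 ≤ rmi f j₂ j₁ := one_le_rmi_of_mem_dashT f hi₁ hj₂ h12 hj₂i₁
  have hsplit : rmi f i₁ j₁ = rmi f i₁ j₂ + rmi f j₂ j₁ := rmi_add f h12.le hj₂i₁
  have hinside : 0 ≤ rmi f i₁ j₂ := rmi_nonneg_of_mem_dashT f hi₂ hj₂i₁ hi₁i₂
  have hzero : rmi f i₁ j₁ = 0 := hi₁.2.1
  omega

theorem stmt5_general (f : ℤ → ℤ) (j₁ j₂ i₁ i₂ : ℤ)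
    (hj₂ : f j₂ ≠ 1) (h12 : j₁ < j₂)
    (hi₁ : i₁ ∈ dashT f j₁) (hi₂ : i₂ ∈ dashT f j₂) :
    (i₂ < i₁ ∨ i₁ < j₂) ∧ dashT f j₁ ∩ dashT f j₂ = ∅ := by
  refine ⟨lt_or_lt_of_mem_dashT f hj₂ h12 hi₁ hi₂, ?_⟩
  refine Set.eq_empty_of_forall_notMem fun i ⟨hi₁', hi₂'⟩ => ?_
  exact (lt_or_lt_of_mem_dashT f hj₂ h12 hi₁' hi₂').elim (lt_irrefl i) hi₂'.1.asymm

/-- Two dashed arrows in a weight diagram can only intersect at a common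
source: if `j₁ < j₂` are empty positions, `i₁ ∈ j₁⇢▼` and `i₂ ∈ j₂⇢▼`, then either
`i₂ < i₁` or `i₁ < j₂`; in particular `j₁⇢▼ ∩ j₂⇢▼ = ∅`. -/
theorem stmt5 (n : ℕ) (f : ℤ → ℤ) (hf : IsWD f n) (j₁ j₂ i₁ i₂ : ℤ)
    (hj₁ : f j₁ ≠ 1) (hj₂ : f j₂ ≠ 1) (h12 : j₁ < j₂)
    (hi₁ : i₁ ∈ dashT f j₁) (hi₂ : i₂ ∈ dashT f j₂) :
    (i₂ < i₁ ∨ i₁ < j₂) ∧ dashT f j₁ ∩ dashT f j₂ = ∅ :=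
  stmt5_general f j₁ j₂ i₁ i₂ hj₂ h12 hi₁ hi₂
end

section
/- Define on dominant weights λ of p(n) the invariant κ(λ) = Σ_{i ∈ c_λ} (-1)^i where c_λ = {λᵢ + n - i : 1 ≤ i ≤ n}. Consider the equivalence relation on weight diagrams generated by: μ ~ λ if d_μ is obtained from d_λ by sliding a black ball along a solid or dashed arrow. Then two dominant weights λ, μ are equivalent if and only if κ(λ) = κ(μ). Moreover κ takes exactly the n+1 values {-n, -n+2, ..., n-2, n}. -/
/-- `κ(f) = Σ_{i ∈ c_f} (-1)^i`, the block invariant of a weight diagram. -/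
noncomputable def kappa (f : ℤ → ℤ) : ℤ :=
  ∑ᶠ i ∈ {i : ℤ | f i = 1}, (if Even i then (1 : ℤ) else -1)

/-- Move the black ball at position `i` to position `j`. -/
def moveBall (f : ℤ → ℤ) (i j : ℤ) : ℤ → ℤ :=
  Function.update (Function.update f i 0) j 1

/-- One slide of a black ball along a solid arrow (from its source `i` to a target
`j ∈ ⟵i▲`), or backwards along a dashed arrow (from its target `i` back to its source
`j`, where `i ∈ j⇢▼`). -/
def Slide (f f' : ℤ → ℤ) : Prop :=
  ∃ i j, ((f i = 1 ∧ j ∈ solidT f i) ∨ (f j ≠ 1 ∧ i ∈ dashT f j)) ∧ f' = moveBall f i j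

open Finset Relation

theorem even_card_of_sum_eq_zero {α : Type*} {s : Finset α} {g : α → ℤ}
    (hg : ∀ x ∈ s, g x = 1 ∨ g x = -1) (h : ∑ x ∈ s, g x = 0) : Even s.card := by
  have hcast : ((∑ x ∈ s, g x : ℤ) : ZMod 2) = s.card := by
    rw [Int.cast_sum, card_eq_sum_ones, Nat.cast_sum]
    refine sum_congr rfl fun x hx => ?_
    rcases hg x hx with hx | hx <;> simp [hx]
  rwa [h, Int.cast_zero, eq_comm, ZMod.natCast_eq_zero_iff_even] at hcast

section Arrows

variable {f : ℤ → ℤ} {i j : ℤ}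

theorem bg_eq_one (h : f i = 1) : bg f i = 1 := if_pos h

theorem bg_eq_neg_one (h : f i ≠ 1) : bg f i = -1 := if_neg h

theorem bg_eq_one_or_eq_neg_one (f : ℤ → ℤ) (i : ℤ) : bg f i = 1 ∨ bg f i = -1 := by
  by_cases h : f i = 1
  · exact .inl (bg_eq_one h)
  · exact .inr (bg_eq_neg_one h)

theorem even_sub_of_sum_bg_Icc_eq_zero (hij : j ≤ i + 1)
    (h : ∑ s ∈ Icc j i, bg f s = 0) : Even (i + 1 - j) := by
  have heven := even_card_of_sum_eq_zero (fun s _ => bg_eq_one_or_eq_neg_one f s) h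
  rw [Int.card_Icc, ← Int.even_coe_nat, Int.toNat_of_nonneg (by omega)] at heven
  exact heven

theorem rpl_of_le (h : i ≤ j) : rpl f i j = 0 := by
  rw [rpl, Icc_eq_empty (by omega), sum_empty]

theorem rpl_eq_bg_add (h : j < i) : rpl f i j = bg f j + rpl f i (j + 1) := by
  rw [rpl, rpl, ← insert_Icc_add_one_left_eq_Icc (show j ≤ i - 1 by omega),
    sum_insert (by simp)]

theorem rmi_of_le (h : i ≤ j) : rmi f i j = 0 := by
  rw [rmi, Icc_eq_empty (by omega), sum_empty, neg_zero]

theorem rmi_add_one (h : j ≤ i) : rmi f (i + 1) j = rmi f i j - bg f (i + 1) := by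
  rw [rmi, rmi, ← insert_Icc_right_eq_Icc_add_one (show j + 1 ≤ i + 1 by omega),
    sum_insert (by simp)]
  ring

end Arrows

section Slides

variable {f f' : ℤ → ℤ} {i j : ℤ}

theorem Slide.exists_moveBall (h : Slide f f') :
    ∃ i j, f i = 1 ∧ f j ≠ 1 ∧ j < i ∧ Even (i - j) ∧ f' = moveBall f i j := by
  obtain ⟨i, j, ⟨hi, hji, hzero, hnonneg⟩ | ⟨hj, hji, hzero, hnonneg⟩, rfl⟩ := h
  · have heven : Even (i - j) := by
      simpa using even_sub_of_sum_bg_Icc_eq_zero (f := f) (show j ≤ i - 1 + 1 by omega) hzero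
    have hgap : j + 1 < i := by obtain ⟨c, hc⟩ := heven; omega
    have hbg : bg f j ≤ 0 := by
      have := hnonneg (j + 1) (by omega) hgap
      rw [rpl_eq_bg_add hji] at hzero
      omega
    refine ⟨i, j, hi, fun hfj => ?_, hji, heven, rfl⟩
    rw [bg_eq_one hfj] at hbg
    omega
  · have heven : Even (i - j) := by
      simpa using even_sub_of_sum_bg_Icc_eq_zero (f := f) (show j + 1 ≤ i + 1 by omega)
        (neg_eq_zero.mp hzero)
    have hgap : j + 1 < i := by obtain ⟨c, hc⟩ := heven; omega
    have hbg : 0 ≤ bg f i := by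
      have := hnonneg (i - 1) (by omega) (by omega)
      have hsplit := rmi_add_one (f := f) (show j ≤ i - 1 by omega)
      rw [sub_add_cancel] at hsplit
      omega
    refine ⟨i, j, ?_, hj, hji, heven, rfl⟩
    by_contra hfi
    rw [bg_eq_neg_one hfi] at hbg
    omega

theorem slide_moveBall_of_add_two (hball : f (i + 2) = 1) (hempty : f i ≠ 1) :
    Slide f (moveBall f (i + 2) i) := by
  by_cases hmid : f (i + 1) = 1
  · refine ⟨i + 2, i, .inl ⟨hball, by omega, ?_, fun s hs hs' => ?_⟩, rfl⟩
    · rw [rpl_eq_bg_add (show i < i + 2 by omega), rpl_eq_bg_add (show i + 1 < i + 2 by omega),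
        rpl_of_le (show i + 2 ≤ i + 1 + 1 by omega), bg_eq_neg_one hempty, bg_eq_one hmid]
      norm_num
    · obtain rfl : s = i + 1 := by omega
      rw [rpl_eq_bg_add hs', rpl_of_le (show i + 2 ≤ i + 1 + 1 by omega), bg_eq_one hmid]
      norm_num
  · refine ⟨i + 2, i, .inr ⟨hempty, by omega, ?_, fun s hs hs' => ?_⟩, rfl⟩
    · rw [show i + 2 = i + 1 + 1 by ring] at hball ⊢
      rw [rmi_add_one (by omega), rmi_add_one le_rfl, rmi_of_le le_rfl, bg_eq_neg_one hmid,
        bg_eq_one hball]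
      norm_num
    · obtain rfl : s = i + 1 := by omega
      rw [rmi_add_one le_rfl, rmi_of_le le_rfl, bg_eq_neg_one hmid]
      norm_num

theorem even_swap_apply_iff (h : Even (i - j)) (k : ℤ) :
    Even (Equiv.swap i j k) ↔ Even k := by
  rw [Int.even_sub] at h
  rw [Equiv.swap_apply_def]
  split_ifs with hki hkj
  · rw [hki, h]
  · rw [hkj, h]
  · rfl

theorem setOf_moveBall_eq_one (hi : f i = 1) (hj : f j ≠ 1) :
    {k | moveBall f i j k = 1} = Equiv.swap i j '' {k | f k = 1} := by
  have hij : i ≠ j := by rintro rfl; exact hj hi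
  rw [Equiv.image_eq_preimage_symm, Equiv.symm_swap]
  ext k
  simp only [Set.mem_preimage, moveBall, Function.update_apply, Equiv.swap_apply_def]
  split_ifs <;> simp_all

theorem kappa_moveBall (hi : f i = 1) (hj : f j ≠ 1) (heven : Even (i - j)) :
    kappa (moveBall f i j) = kappa f := by
  rw [kappa, setOf_moveBall_eq_one hi hj, finsum_mem_image (Equiv.injective _).injOn]
  simp only [even_swap_apply_iff heven]
  rfl

end Slides

theorem kappa_eq_of_slide {f f' : ℤ → ℤ} (h : Slide f f') : kappa f' = kappa f := by
  obtain ⟨i, j, hi, hj, -, heven, rfl⟩ := h.exists_moveBall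
  exact kappa_moveBall hi hj heven

theorem kappa_eq_of_eqvGen_slide {f f' : ℤ → ℤ} (h : EqvGen Slide f f') :
    kappa f = kappa f' :=
  (Equivalence.eqvGen_iff (InvImage.equivalence _ kappa eq_equivalence)).mp
    (EqvGen.mono (fun _ _ hs => (kappa_eq_of_slide hs).symm) _ _ h)

theorem moveBall_eq_comp_swap {f : ℤ → ℤ} {i j : ℤ} (hi : f i = 1) (hj : f j = 0) :
    moveBall f i j = f ∘ Equiv.swap i j := by
  funext k
  simp only [moveBall, Function.update_apply, Function.comp_apply, Equiv.swap_apply_def]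
  split_ifs <;> simp_all

def slideSymmetries : Subgroup (Equiv.Perm ℤ) where
  carrier := {σ | ∀ f : ℤ → ℤ, (∀ k, f k = 0 ∨ f k = 1) → EqvGen Slide f (f ∘ σ)}
  mul_mem' {σ τ} hσ hτ f hf := (hσ f hf).trans _ _ _ (hτ (f ∘ σ) fun k => hf (σ k))
  one_mem' f _ := EqvGen.refl f
  inv_mem' {σ} hσ f hf := by
    simpa [Function.comp_def] using (hσ (f ∘ ⇑σ⁻¹) fun k => hf (σ⁻¹ k)).symm

theorem swap_add_two_mem_slideSymmetries (i : ℤ) :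
    Equiv.swap i (i + 2) ∈ slideSymmetries := by
  have hslide : ∀ g : ℤ → ℤ, g i = 0 → g (i + 2) = 1 →
      EqvGen Slide g (g ∘ Equiv.swap i (i + 2)) := by
    intro g hgi hgi2
    rw [Equiv.swap_comm, ← moveBall_eq_comp_swap hgi2 hgi]
    exact .rel _ _ (slide_moveBall_of_add_two hgi2 (by omega))
  intro f hf
  by_cases heq : f i = f (i + 2)
  · rw [Equiv.comp_swap_eq_update, heq, Function.update_eq_self, ← heq, Function.update_eq_self]
    exact .refl f
  rcases hf i with hi | hi
  · exact hslide f hi ((hf (i + 2)).resolve_left (by omega))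
  · have hi2 : f (i + 2) = 0 := (hf (i + 2)).resolve_right (by omega)
    simpa [Function.comp_def] using (hslide (f ∘ Equiv.swap i (i + 2)) (by simpa) (by simpa)).symm

theorem swap_mem_slideSymmetries {a b : ℤ} (h : Even (b - a)) :
    Equiv.swap a b ∈ slideSymmetries := by
  wlog hab : a ≤ b generalizing a b
  · rw [Equiv.swap_comm]
    exact this (by rw [← neg_sub]; exact h.neg) (by omega)
  have hstep : ∀ d : ℕ, Equiv.swap a (a + 2 * d + 2) ∈ slideSymmetries := by
    intro d
    induction d with
    | zero => simpa using swap_add_two_mem_slideSymmetries a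
    | succ d ih =>
      set σ := Equiv.swap (a + 2 * d + 2) (a + 2 * d + 2 + 2)
      have hconj := Equiv.swap_apply_apply σ a (a + 2 * d + 2)
      rw [Equiv.swap_apply_of_ne_of_ne (by omega) (by omega), Equiv.swap_apply_left] at hconj
      rw [show a + 2 * ((d + 1 : ℕ) : ℤ) + 2 = a + 2 * d + 2 + 2 by push_cast; ring, hconj]
      exact mul_mem (mul_mem (swap_add_two_mem_slideSymmetries _) ih)
        (inv_mem (swap_add_two_mem_slideSymmetries _))
  obtain ⟨c, hc⟩ := h
  rcases hab.eq_or_lt with rfl | hlt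
  · rw [Equiv.swap_self]
    exact one_mem _
  · obtain ⟨d, hd⟩ : ∃ d : ℕ, (d : ℤ) = c - 1 := ⟨(c - 1).toNat, by omega⟩
    rw [show b = a + 2 * d + 2 by omega]
    exact hstep d

theorem exists_mem_sdiff_of_card_filter_eq {α : Type*} [DecidableEq α] {S S' : Finset α}
    (p : α → Prop) [DecidablePred p] (hcard : #(S.filter p) = #(S'.filter p)) {a : α}
    (ha : a ∈ S \ S') (hpa : p a) : ∃ b ∈ S' \ S, p b := by
  rw [mem_sdiff] at ha
  have hap : a ∈ S.filter p := mem_filter.mpr ⟨ha.1, hpa⟩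
  have hlt : #((S.filter p).erase a) < #(S'.filter p) := by
    rw [card_erase_of_mem hap, ← hcard]
    exact Nat.sub_lt (card_pos.mpr ⟨a, hap⟩) one_pos
  obtain ⟨b, hb, hbnot⟩ := exists_mem_notMem_of_card_lt_card hlt
  rw [mem_filter] at hb
  refine ⟨b, mem_sdiff.mpr ⟨hb.1, fun hbS => hbnot (mem_erase.mpr ⟨?_, ?_⟩)⟩, hb.2⟩
  · rintro rfl
    exact ha.2 hb.1
  · exact mem_filter.mpr ⟨hbS, hb.2⟩

def diagram (S : Finset ℤ) : ℤ → ℤ := fun k => if k ∈ S then 1 else 0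

section Diagram

variable {S S' : Finset ℤ}

theorem diagram_eq_zero_or_eq_one (S : Finset ℤ) (k : ℤ) :
    diagram S k = 0 ∨ diagram S k = 1 := by
  unfold diagram
  split_ifs <;> simp

theorem setOf_diagram_eq_one (S : Finset ℤ) : {k | diagram S k = 1} = S := by
  ext k
  simp [diagram]

theorem isWD_diagram (S : Finset ℤ) : IsWD (diagram S) S.card := by
  refine ⟨diagram_eq_zero_or_eq_one S, ?_, ?_⟩ <;> rw [setOf_diagram_eq_one]
  · exact S.finite_toSet
  · exact Set.ncard_coe_finset S

theorem IsWD.exists_eq_diagram {f : ℤ → ℤ} {n : ℕ} (hf : IsWD f n) :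
    ∃ S : Finset ℤ, f = diagram S ∧ S.card = n := by
  obtain ⟨h01, hfin, hcard⟩ := hf
  refine ⟨hfin.toFinset, funext fun k => ?_, ?_⟩
  · rcases h01 k with hk | hk <;> simp [diagram, hk]
  · rwa [← Set.ncard_coe_finset, Set.Finite.coe_toFinset]

theorem kappa_diagram_eq_sum (S : Finset ℤ) :
    kappa (diagram S) = ∑ k ∈ S, if Even k then 1 else -1 := by
  rw [kappa, setOf_diagram_eq_one, finsum_mem_coe_finset]

theorem kappa_diagram (S : Finset ℤ) :
    kappa (diagram S) = S.card - 2 * #{k ∈ S | ¬Even k} := by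
  rw [kappa_diagram_eq_sum, sum_ite, sum_const, sum_const,
    ← card_filter_add_card_filter_not (s := S) (fun k => Even k)]
  push_cast
  ring

theorem diagram_comp_swap (S : Finset ℤ) (a b : ℤ) :
    diagram S ∘ Equiv.swap a b = diagram (S.map (Equiv.swap a b).toEmbedding) := by
  funext k
  simp [diagram, mem_map_equiv]

theorem exists_mem_sdiff_even_iff (hcard : S.card = S'.card)
    (hκ : kappa (diagram S) = kappa (diagram S')) {a : ℤ} (ha : a ∈ S \ S') :
    ∃ b ∈ S' \ S, (Even b ↔ Even a) := by
  have hodd : #{k ∈ S | ¬Even k} = #{k ∈ S' | ¬Even k} := by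
    rw [kappa_diagram, kappa_diagram, hcard] at hκ
    omega
  by_cases hev : Even a
  · have heven : #{k ∈ S | Even k} = #{k ∈ S' | Even k} := by
      have := card_filter_add_card_filter_not (s := S) (fun k => Even k)
      have := card_filter_add_card_filter_not (s := S') (fun k => Even k)
      omega
    obtain ⟨b, hb, hbev⟩ := exists_mem_sdiff_of_card_filter_eq _ heven ha hev
    exact ⟨b, hb, iff_of_true hbev hev⟩
  · obtain ⟨b, hb, hbodd⟩ := exists_mem_sdiff_of_card_filter_eq _ hodd ha hev
    exact ⟨b, hb, iff_of_false hbodd hev⟩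

theorem eqvGen_slide_diagram (hcard : S.card = S'.card)
    (hκ : kappa (diagram S) = kappa (diagram S')) : EqvGen Slide (diagram S) (diagram S') := by
  induction hN : #(S \ S') generalizing S with
  | zero =>
    rw [card_eq_zero, sdiff_eq_empty_iff_subset] at hN
    rw [eq_of_subset_of_card_le hN hcard.ge]
    exact .refl _
  | succ N ih =>
    obtain ⟨a, ha⟩ : (S \ S').Nonempty := card_pos.mp (by omega)
    obtain ⟨b, hb, hpar⟩ := exists_mem_sdiff_even_iff hcard hκ ha
    rw [mem_sdiff] at ha hb
    set T := S.map (Equiv.swap a b).toEmbedding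
    have hST : EqvGen Slide (diagram S) (diagram T) := by
      rw [← diagram_comp_swap]
      exact swap_mem_slideSymmetries (Int.even_sub.mpr hpar) _ (diagram_eq_zero_or_eq_one S)
    have hTS' : T \ S' = (S \ S').erase a := by
      ext k
      simp only [T, mem_sdiff, mem_erase, mem_map_equiv, Equiv.symm_swap, Equiv.swap_apply_def]
      split_ifs <;> subst_vars <;> tauto
    refine hST.trans _ _ _ (ih ?_ ?_ ?_)
    · rw [card_map, hcard]
    · rw [← kappa_eq_of_eqvGen_slide hST, hκ]
    · rw [hTS', card_erase_of_mem (mem_sdiff.mpr ha), hN, Nat.add_sub_cancel]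

end Diagram

theorem exists_card_eq_kappa_diagram_eq {n m : ℕ} (hm : m ≤ n) :
    ∃ S : Finset ℤ, S.card = n ∧ kappa (diagram S) = n - 2 * m := by
  have hinj : ∀ c : ℤ, Function.Injective fun k : ℕ => 2 * (k : ℤ) + c := by
    intro c k l h
    simp only at h
    omega
  set evens := (range (n - m)).map ⟨_, hinj 0⟩
  set odds := (range m).map ⟨_, hinj 1⟩
  have hdisj : Disjoint evens odds := by
    simp only [evens, odds, disjoint_left, mem_map, Function.Embedding.coeFn_mk]
    rintro _ ⟨k, -, rfl⟩ ⟨l, -, hl⟩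
    omega
  refine ⟨evens ∪ odds, ?_, ?_⟩
  · rw [card_union_of_disjoint hdisj, card_map, card_map, card_range, card_range,
      Nat.sub_add_cancel hm]
  · rw [kappa_diagram_eq_sum, sum_union hdisj, sum_map, sum_map]
    simp only [Function.Embedding.coeFn_mk, add_zero, even_two_mul, Int.not_even_two_mul_add_one,
      if_true, if_false, sum_const, card_range, nsmul_eq_mul, mul_one, mul_neg_one]
    omega

/-- for weight diagrams with `n` black balls, the equivalence relation
generated by single slides along solid or dashed arrows has equivalence classes exactly
the level sets of `κ`; moreover `κ` takes exactly the values `{-n, -n+2, ..., n-2, n}`. -/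
theorem stmt17 (n : ℕ) :
    (∀ f f' : ℤ → ℤ, IsWD f n → IsWD f' n →
        (Relation.EqvGen Slide f f' ↔ kappa f = kappa f')) ∧
    (∀ f : ℤ → ℤ, IsWD f n → ∃ m : ℕ, m ≤ n ∧ kappa f = (n : ℤ) - 2 * m) ∧
    (∀ m : ℕ, m ≤ n → ∃ f : ℤ → ℤ, IsWD f n ∧ kappa f = (n : ℤ) - 2 * m) := by
  refine ⟨fun f f' hf hf' => ⟨kappa_eq_of_eqvGen_slide, fun hκ => ?_⟩, fun f hf => ?_,
    fun m hm => ?_⟩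
  · obtain ⟨S, rfl, hS⟩ := hf.exists_eq_diagram
    obtain ⟨S', rfl, hS'⟩ := hf'.exists_eq_diagram
    exact eqvGen_slide_diagram (hS.trans hS'.symm) hκ
  · obtain ⟨S, rfl, rfl⟩ := hf.exists_eq_diagram
    exact ⟨_, card_filter_le _ _, kappa_diagram S⟩
  · obtain ⟨S, hS, hκ⟩ := exists_card_eq_kappa_diagram_eq hm
    exact ⟨diagram S, hS ▸ isWD_diagram S, hκ⟩
end

section
/- Let λ = 0 be the zero weight for p(n), with weight diagram having black balls at positions 0, 1, ..., n-1. Then a weight diagram μ (with associated function f_μ) lies in ▲(0) if and only if f_μ(0) = 1 and f_μ(i) + f_μ(-i) = 1 for all i = 1, 2, ..., n-1 (and f_μ(j) = 0 for |j| ≥ n). In particular |▲(0)| = 2^(n-1). -/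
/-- `μ ∈ ▲(fl)`: `μ` is a weight diagram with `n` balls such that for every black ball
`i` of `fl`, exactly one position among `{i} ∪ ⟵i▲(fl)` carries a black ball of `μ`. -/
def inUp (fl : ℤ → ℤ) (n : ℕ) (μ : ℤ → ℤ) : Prop :=
  IsWD μ n ∧ ∀ i, fl i = 1 → ∃! p, (p = i ∨ p ∈ solidT fl i) ∧ μ p = 1

/-- The weight diagram of the zero weight of `p(n)`: black balls at `0, 1, ..., n-1`. -/
def zeroWD (n : ℕ) : ℤ → ℤ := fun i => if 0 ≤ i ∧ i < n then 1 else 0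

lemma bg_zeroWD (n : ℕ) (s : ℤ) :
    bg (zeroWD n) s = if 0 ≤ s ∧ s < n then 1 else -1 := by
  unfold bg zeroWD
  split_ifs <;> simp_all

/-- Left of a black ball `i` of the zero diagram, `r⁺` drops by one per step until `0` and then
rises by one per step, so it is `i - |j|`. -/
lemma rpl_zeroWD {n : ℕ} {i j : ℤ} (hi : 0 ≤ i) (hin : i ≤ n) (hji : j < i) :
    rpl (zeroWD n) i j = i - |j| := by
  unfold rpl
  rw [Finset.sum_congr rfl (fun s _ => bg_zeroWD n s), Finset.sum_ite]
  have h_pos : (Finset.Icc j (i - 1)).filter (fun s => 0 ≤ s ∧ s < (n : ℤ)) =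
      Finset.Icc (max j 0) (i - 1) := by
    ext s
    simp only [Finset.mem_filter, Finset.mem_Icc]
    omega
  have h_neg : (Finset.Icc j (i - 1)).filter (fun s => ¬(0 ≤ s ∧ s < (n : ℤ))) =
      Finset.Icc j (-1) := by
    ext s
    simp only [Finset.mem_filter, Finset.mem_Icc]
    omega
  rw [h_pos, h_neg, Finset.sum_const, Finset.sum_const, Int.card_Icc, Int.card_Icc]
  simp only [nsmul_eq_mul, mul_one, mul_neg]
  rcases abs_cases j with ⟨h, h'⟩ | ⟨h, h'⟩ <;> omega

lemma solidT_zeroWD_zero (n : ℕ) : solidT (zeroWD n) 0 = ∅ := by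
  ext j
  simp only [solidT, Set.mem_ofPred_eq, Set.mem_empty_iff_false, iff_false, not_and]
  intro hj h0
  rw [rpl_zeroWD le_rfl (Int.natCast_nonneg n) hj] at h0
  rcases abs_cases j with ⟨h, h'⟩ | ⟨h, h'⟩ <;> omega

lemma solidT_zeroWD_of_pos {n : ℕ} {i : ℤ} (hi : 0 < i) (hin : i < n) :
    solidT (zeroWD n) i = {-i} := by
  ext j
  simp only [solidT, Set.mem_ofPred_eq, Set.mem_singleton_iff]
  constructor
  · rintro ⟨hji, h0, -⟩
    rw [rpl_zeroWD hi.le hin.le hji] at h0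
    rcases abs_cases j with ⟨h, h'⟩ | ⟨h, h'⟩ <;> omega
  · rintro rfl
    refine ⟨by omega, by rw [rpl_zeroWD hi.le hin.le (by omega)]; simp [abs_of_pos hi], ?_⟩
    intro s hs hsi
    rw [rpl_zeroWD hi.le hin.le hsi]
    rcases abs_cases s with ⟨h, h'⟩ | ⟨h, h'⟩ <;> omega

lemma existsUnique_eq_or_eq_iff {α : Type*} {μ : α → ℤ} (hbin : ∀ a, μ a = 0 ∨ μ a = 1)
    {a b : α} (hab : a ≠ b) :
    (∃! p, (p = a ∨ p = b) ∧ μ p = 1) ↔ μ a + μ b = 1 := by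
  constructor
  · rintro ⟨p, ⟨rfl | rfl, hp⟩, huniq⟩
    · have : μ b ≠ 1 := fun hb => hab (huniq b ⟨Or.inr rfl, hb⟩).symm
      have := hbin b
      omega
    · have : μ a ≠ 1 := fun ha => hab (huniq a ⟨Or.inl rfl, ha⟩)
      have := hbin a
      omega
  · intro hsum
    rcases hbin a with ha | ha
    · refine ⟨b, ⟨Or.inr rfl, by omega⟩, ?_⟩
      rintro y ⟨rfl | rfl, hy⟩ <;> [omega; rfl]
    · refine ⟨a, ⟨Or.inl rfl, ha⟩, ?_⟩
      rintro y ⟨rfl | rfl, hy⟩ <;> [rfl; omega]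

lemma existsUnique_solidT_zeroWD_zero_iff (n : ℕ) (μ : ℤ → ℤ) :
    (∃! p, (p = 0 ∨ p ∈ solidT (zeroWD n) 0) ∧ μ p = 1) ↔ μ 0 = 1 := by
  simp only [solidT_zeroWD_zero, Set.mem_empty_iff_false, or_false]
  exact ⟨fun ⟨_, ⟨rfl, h⟩, _⟩ => h, fun h => ⟨0, ⟨rfl, h⟩, fun _ hy => hy.1⟩⟩

lemma existsUnique_solidT_zeroWD_iff_of_pos {n : ℕ} {μ : ℤ → ℤ}
    (hbin : ∀ i, μ i = 0 ∨ μ i = 1) {i : ℤ} (hi : 0 < i) (hin : i < n) :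
    (∃! p, (p = i ∨ p ∈ solidT (zeroWD n) i) ∧ μ p = 1) ↔ μ i + μ (-i) = 1 := by
  rw [solidT_zeroWD_of_pos hi hin]
  exact existsUnique_eq_or_eq_iff hbin (by omega)

lemma forall_existsUnique_solidT_zeroWD_iff {n : ℕ} (hn : 1 ≤ n) {μ : ℤ → ℤ}
    (hbin : ∀ i, μ i = 0 ∨ μ i = 1) :
    (∀ i, zeroWD n i = 1 → ∃! p, (p = i ∨ p ∈ solidT (zeroWD n) i) ∧ μ p = 1) ↔
      μ 0 = 1 ∧ ∀ i : ℤ, 1 ≤ i → i ≤ (n : ℤ) - 1 → μ i + μ (-i) = 1 := by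
  have hball : ∀ i, zeroWD n i = 1 ↔ 0 ≤ i ∧ i < n := fun i => by simp [zeroWD]
  simp only [hball]
  constructor
  · intro h
    refine ⟨(existsUnique_solidT_zeroWD_zero_iff n μ).1 (h 0 ⟨le_rfl, by omega⟩), ?_⟩
    intro i hi hin
    exact (existsUnique_solidT_zeroWD_iff_of_pos hbin (by omega) (by omega)).1
      (h i ⟨by omega, by omega⟩)
  · rintro ⟨h0, hpair⟩ i ⟨hi, hin⟩
    rcases hi.eq_or_lt with rfl | hi
    · exact (existsUnique_solidT_zeroWD_zero_iff n μ).2 h0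
    · exact (existsUnique_solidT_zeroWD_iff_of_pos hbin hi hin).2 (hpair i hi (by omega))

section Pairing

variable {n : ℕ} {μ : ℤ → ℤ} (hbin : ∀ i, μ i = 0 ∨ μ i = 1) (h0 : μ 0 = 1)
  (hpair : ∀ i : ℤ, 1 ≤ i → i ≤ (n : ℤ) - 1 → μ i + μ (-i) = 1)
include hbin h0 hpair

/-- Each `i ∈ [0, n)` contributes exactly one ball, at `i` or at `-i`. -/
lemma card_filter_Ioo_eq_one_of_pairing :
    ((Finset.Ioo (-(n : ℤ)) n).filter (μ · = 1)).card = n := by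
  have hIcc : (Finset.Icc (0 : ℤ) (n - 1)).card = n := by rw [Int.card_Icc]; omega
  rw [← hIcc]
  symm
  refine Finset.card_nbij' (fun i => if μ i = 1 then i else -i) (fun j => |j|) ?_ ?_ ?_ ?_
  · intro i hi
    simp only [Finset.coe_Icc, Set.mem_Icc, Finset.coe_filter, Finset.mem_Ioo,
      Set.mem_ofPred_eq] at hi ⊢
    split_ifs with h
    · exact ⟨by omega, h⟩
    · rcases hi.1.eq_or_lt with rfl | hi0
      · exact absurd h0 h
      · have := hpair i (by omega) hi.2
        have := hbin i
        have := hbin (-i)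
        exact ⟨by omega, by omega⟩
  · intro j hj
    simp only [Finset.coe_Icc, Set.mem_Icc, Finset.coe_filter, Finset.mem_Ioo,
      Set.mem_ofPred_eq] at hj ⊢
    rcases abs_cases j with ⟨h, h'⟩ | ⟨h, h'⟩ <;> omega
  · intro i hi
    simp only [Finset.coe_Icc, Set.mem_Icc] at hi
    dsimp only
    split_ifs <;> simp [abs_of_nonneg hi.1]
  · intro j hj
    simp only [Finset.coe_filter, Finset.mem_Ioo, Set.mem_ofPred_eq] at hj
    dsimp only
    rcases le_or_gt 0 j with hj0 | hj0
    · simp [abs_of_nonneg hj0, hj.2]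
    · have := hpair (-j) (by omega) (by omega)
      rw [neg_neg] at this
      simp [abs_of_neg hj0, show μ (-j) ≠ 1 by omega]

lemma isWD_iff_of_pairing : IsWD μ n ↔ ∀ j : ℤ, (n : ℤ) ≤ |j| → μ j = 0 := by
  set T := (Finset.Ioo (-(n : ℤ)) n).filter (μ · = 1)
  have hTcard : T.card = n := card_filter_Ioo_eq_one_of_pairing hbin h0 hpair
  constructor
  · rintro ⟨-, hfin, hcard⟩ j hj
    have hT : (T : Set ℤ) = {i | μ i = 1} :=
      Set.eq_of_subset_of_ncard_le (fun j hj => (Finset.mem_filter.1 hj).2)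
        (by rw [hcard, Set.ncard_coe_finset, hTcard]) hfin
    refine (hbin j).resolve_right fun h => ?_
    have hjT : j ∈ (T : Set ℤ) := hT ▸ h
    simp only [T, Finset.coe_filter, Finset.mem_Ioo, Set.mem_ofPred_eq] at hjT
    rcases abs_cases j with ⟨h, h'⟩ | ⟨h, h'⟩ <;> omega
  · intro hout
    have hT : {i | μ i = 1} = (T : Set ℤ) := by
      ext j
      simp only [T, Finset.coe_filter, Finset.mem_Ioo, Set.mem_ofPred_eq]
      refine ⟨fun h => ⟨?_, h⟩, fun h => h.2⟩
      by_contra hj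
      have := hout j (by rcases abs_cases j with ⟨h, h'⟩ | ⟨h, h'⟩ <;> omega)
      omega
    exact ⟨hbin, hT ▸ T.finite_toSet, by rw [hT, Set.ncard_coe_finset, hTcard]⟩

end Pairing

def IsSignChoice (n : ℕ) (μ : ℤ → ℤ) : Prop :=
  (∀ i, μ i = 0 ∨ μ i = 1) ∧ μ 0 = 1 ∧
    (∀ i : ℤ, 1 ≤ i → i ≤ (n : ℤ) - 1 → μ i + μ (-i) = 1) ∧
    (∀ j : ℤ, (n : ℤ) ≤ |j| → μ j = 0)

theorem inUp_zeroWD_iff {n : ℕ} (hn : 1 ≤ n) (μ : ℤ → ℤ) :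
    inUp (zeroWD n) n μ ↔ IsSignChoice n μ := by
  constructor
  · rintro ⟨hwd, harrows⟩
    obtain ⟨h0, hpair⟩ := (forall_existsUnique_solidT_zeroWD_iff hn hwd.1).1 harrows
    exact ⟨hwd.1, h0, hpair, (isWD_iff_of_pairing hwd.1 h0 hpair).1 hwd⟩
  · rintro ⟨hbin, h0, hpair, hout⟩
    exact ⟨(isWD_iff_of_pairing hbin h0 hpair).2 hout,
      (forall_existsUnique_solidT_zeroWD_iff hn hbin).2 ⟨h0, hpair⟩⟩

noncomputable def signedDiagram (n : ℕ) (b : Finset.Icc (1 : ℤ) (n - 1) → Bool)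
    (j : ℤ) : ℤ :=
  if j = 0 then 1
  else if h : j ∈ Finset.Icc (1 : ℤ) (n - 1) then (if b ⟨j, h⟩ then 1 else 0)
  else if h : -j ∈ Finset.Icc (1 : ℤ) (n - 1) then (if b ⟨-j, h⟩ then 0 else 1)
  else 0

section Counting

variable {n : ℕ}

lemma signedDiagram_of_mem (b : Finset.Icc (1 : ℤ) (n - 1) → Bool) {i : ℤ}
    (hi : i ∈ Finset.Icc (1 : ℤ) (n - 1)) :
    signedDiagram n b i = if b ⟨i, hi⟩ then 1 else 0 := by
  have : i ≠ 0 := by rw [Finset.mem_Icc] at hi; omega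
  simp only [signedDiagram, if_neg this, dif_pos hi]

lemma signedDiagram_neg_of_mem (b : Finset.Icc (1 : ℤ) (n - 1) → Bool) {i : ℤ}
    (hi : i ∈ Finset.Icc (1 : ℤ) (n - 1)) :
    signedDiagram n b (-i) = if b ⟨i, hi⟩ then 0 else 1 := by
  have hi' := Finset.mem_Icc.1 hi
  have h0 : -i ≠ 0 := by omega
  have hni : -i ∉ Finset.Icc (1 : ℤ) (n - 1) := by rw [Finset.mem_Icc]; omega
  simp only [signedDiagram, if_neg h0, dif_neg hni, neg_neg, dif_pos hi]

lemma signedDiagram_of_le_abs (b : Finset.Icc (1 : ℤ) (n - 1) → Bool) {j : ℤ}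
    (hj : (n : ℤ) ≤ |j|) (hn : 1 ≤ n) : signedDiagram n b j = 0 := by
  have hj' : n ≤ j ∨ n ≤ -j := by rcases abs_cases j with ⟨h, h'⟩ | ⟨h, h'⟩ <;> omega
  have h0 : j ≠ 0 := by omega
  have h1 : j ∉ Finset.Icc (1 : ℤ) (n - 1) := by rw [Finset.mem_Icc]; omega
  have h2 : -j ∉ Finset.Icc (1 : ℤ) (n - 1) := by rw [Finset.mem_Icc]; omega
  simp only [signedDiagram, if_neg h0, dif_neg h1, dif_neg h2]

lemma isSignChoice_signedDiagram (hn : 1 ≤ n) (b : Finset.Icc (1 : ℤ) (n - 1) → Bool) :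
    IsSignChoice n (signedDiagram n b) := by
  refine ⟨fun j => ?_, by simp [signedDiagram], fun i hi hin => ?_,
    fun j hj => signedDiagram_of_le_abs b hj hn⟩
  · unfold signedDiagram
    split_ifs <;> simp
  · have hmem : i ∈ Finset.Icc (1 : ℤ) (n - 1) := Finset.mem_Icc.2 ⟨hi, hin⟩
    rw [signedDiagram_of_mem b hmem, signedDiagram_neg_of_mem b hmem]
    split_ifs <;> norm_num

lemma IsSignChoice.signedDiagram_eq {μ : ℤ → ℤ} (h : IsSignChoice n μ) :
    signedDiagram n (fun i => decide (μ i = 1)) = μ := by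
  obtain ⟨hbin, h0, hpair, hout⟩ := h
  funext j
  by_cases hj : j ∈ Finset.Icc (1 : ℤ) (n - 1)
  · rw [signedDiagram_of_mem _ hj]
    rcases hbin j with h | h <;> simp [h]
  by_cases hnj : -j ∈ Finset.Icc (1 : ℤ) (n - 1)
  · have hsum := hpair (-j) (Finset.mem_Icc.1 hnj).1 (Finset.mem_Icc.1 hnj).2
    rw [neg_neg] at hsum
    rw [← neg_neg j, signedDiagram_neg_of_mem _ hnj]
    rcases hbin (-j) with h | h <;> simp [h] <;> omega
  rcases eq_or_ne j 0 with rfl | hj0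
  · simp [signedDiagram, h0]
  · simp only [Finset.mem_Icc] at hj hnj
    rw [hout j (by rcases abs_cases j with ⟨h, h'⟩ | ⟨h, h'⟩ <;> omega)]
    simp only [signedDiagram, if_neg hj0, Finset.mem_Icc, dif_neg hj, dif_neg hnj]

noncomputable def signChoiceEquiv (hn : 1 ≤ n) :
    {μ : ℤ → ℤ // IsSignChoice n μ} ≃ (Finset.Icc (1 : ℤ) (n - 1) → Bool) where
  toFun μ i := decide (μ.1 i = 1)
  invFun b := ⟨signedDiagram n b, isSignChoice_signedDiagram hn b⟩
  left_inv μ := Subtype.ext μ.2.signedDiagram_eq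
  right_inv b := by
    funext i
    change decide (signedDiagram n b i = 1) = b i
    rw [signedDiagram_of_mem b i.2]
    cases b i <;> simp

lemma card_isSignChoice (hn : 1 ≤ n) :
    Nat.card {μ : ℤ → ℤ // IsSignChoice n μ} = 2 ^ (n - 1) := by
  rw [Nat.card_congr (signChoiceEquiv hn), Nat.card_fun, Nat.card_eq_fintype_card,
    Fintype.card_bool, Nat.card_eq_finsetCard, Int.card_Icc]
  congr 1
  omega

end Counting

/-- a weight diagram `μ` lies in `▲(0)` if and only if `f_μ(0) = 1`,
`f_μ(i) + f_μ(-i) = 1` for `i = 1,...,n-1`, and `f_μ(j) = 0` for `|j| ≥ n`.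
In particular `|▲(0)| = 2^(n-1)`. -/
theorem stmt18 (n : ℕ) (hn : 1 ≤ n) :
    (∀ μ : ℤ → ℤ,
      inUp (zeroWD n) n μ ↔
        ((∀ i, μ i = 0 ∨ μ i = 1) ∧ μ 0 = 1 ∧
          (∀ i : ℤ, 1 ≤ i → i ≤ (n : ℤ) - 1 → μ i + μ (-i) = 1) ∧
          (∀ j : ℤ, (n : ℤ) ≤ |j| → μ j = 0))) ∧
    Nat.card {μ : ℤ → ℤ // inUp (zeroWD n) n μ} = 2 ^ (n - 1) := by
  refine ⟨inUp_zeroWD_iff hn, ?_⟩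
  rw [Nat.card_congr (Equiv.subtypeEquivRight (inUp_zeroWD_iff hn)), card_isSignChoice hn]
end
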